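/- arXiv:2312.07291 — 2 statements merged into one kernel-verified Lean document; each statement's English description precedes it below -/
import Mathlib

section
/- Let τ > 0, α > −1 be real, n, j ∈ ℕ, and λ ∈ ℂ with Re λ < 0. Then ∫₀^∞ t^j e^{λt} l_{n,τ}^α(t) dt = (Γ(α/2+j+1)/(τ/2−λ)^{α/2+j+1}) · τ^{(α+1)/2} · (Γ(n+α+1)/(Γ(α+1)·n!)) · √(n!/Γ(n+α+1)) · Σ_{k=0}^n ((−n)_k · (α/2+j+1)_k / ((α+1)_k · k!)) · (τ/(τ/2−λ))^k, where (x)_k denotes the ascending Pochhammer symbol and the complex power is the principal branch (note Re(τ/2−λ) > 0). -/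
open MeasureTheory

/-- The generalized Laguerre polynomial
`L_n^α(t) = ∑_{k=0}^n (-1)^k (Γ(n+α+1)/(Γ(k+α+1)(n-k)!)) t^k/k!`. -/
noncomputable def lagPoly (α : ℝ) (n : ℕ) (t : ℝ) : ℝ :=
  ∑ k ∈ Finset.range (n + 1),
    (-1 : ℝ) ^ k * (Real.Gamma (n + α + 1) / (Real.Gamma (k + α + 1) * (n - k).factorial)) *
      t ^ k / (k.factorial : ℝ)

/-- The Laguerre function `l_{n,τ}^α(t)`. -/
noncomputable def lagFun (α τ : ℝ) (n : ℕ) (t : ℝ) : ℝ :=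
  Real.sqrt (n.factorial / Real.Gamma (n + α + 1)) * τ ^ ((α + 1) / 2) *
    t ^ (α / 2) * Real.exp (-τ * t / 2) * lagPoly α n (τ * t)

/-!
On the right half-plane, `∫₀^∞ t^(s-1) e^(-w t) dt = Γ(s) / w^s`: the left side is the complex
moment generating function of `t ↦ -t` under the measure `t^(s-1) dt` on `(0, ∞)`, hence
holomorphic for `Re w > 0`, and both sides agree for real `w > 0` by the Gamma integral, so the
identity theorem applies. Writing `L_n^α` in hypergeometric form,
`L_n^α(t) = Γ(n+α+1)/(Γ(α+1) n!) · ∑ₖ (-n)ₖ/((α+1)ₖ k!) tᵏ`, and integrating term by term with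
`Γ(s + k) = Γ(s) (s)ₖ` gives the `₂F₁` series.
-/

open Set Filter Topology ProbabilityTheory

noncomputable def rpowMeasureIoi (s : ℝ) : Measure ℝ :=
  (volume.restrict (Ioi 0)).withDensity fun t => ENNReal.ofReal (t ^ (s - 1))

lemma toReal_ofReal_rpow_smul_ae_eq (s : ℝ) (g : ℝ → ℂ) :
    (fun t => (ENNReal.ofReal (t ^ (s - 1))).toReal • g t) =ᵐ[volume.restrict (Ioi 0)]
      fun t => (t : ℂ) ^ ((s : ℂ) - 1) * g t := by
  filter_upwards [ae_restrict_mem measurableSet_Ioi] with t (ht : 0 < t)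
  rw [ENNReal.toReal_ofReal (by positivity), Complex.real_smul, Complex.ofReal_cpow ht.le]
  push_cast
  rfl

lemma integral_rpowMeasureIoi (s : ℝ) (g : ℝ → ℂ) :
    ∫ t, g t ∂rpowMeasureIoi s = ∫ t in Ioi (0 : ℝ), (t : ℂ) ^ ((s : ℂ) - 1) * g t := by
  rw [rpowMeasureIoi, integral_withDensity_eq_integral_toReal_smul (by fun_prop)
    (.of_forall fun _ => ENNReal.ofReal_lt_top)]
  exact integral_congr_ae (toReal_ofReal_rpow_smul_ae_eq s g)

lemma integrable_rpowMeasureIoi_iff {s : ℝ} {g : ℝ → ℂ} :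
    Integrable g (rpowMeasureIoi s) ↔
      IntegrableOn (fun t : ℝ => (t : ℂ) ^ ((s : ℂ) - 1) * g t) (Ioi 0) := by
  rw [rpowMeasureIoi, integrable_withDensity_iff_integrable_smul' (by fun_prop)
    (.of_forall fun _ => ENNReal.ofReal_lt_top)]
  exact integrable_congr (toReal_ofReal_rpow_smul_ae_eq s g)

lemma Ioi_subset_interior_integrableExpSet_rpowMeasureIoi {s : ℝ} (hs : 0 < s) :
    Ioi 0 ⊆ interior (integrableExpSet (fun t => -t) (rpowMeasureIoi s)) := by
  refine interior_maximal (fun u (hu : 0 < u) => ?_) isOpen_Ioi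
  rw [integrableExpSet, mem_ofPred_eq, rpowMeasureIoi, integrable_withDensity_iff (by fun_prop)
    (.of_forall fun _ => ENNReal.ofReal_lt_top)]
  refine (integrableOn_rpow_mul_exp_neg_mul_rpow (s := s - 1) (by linarith) one_pos hu).congr_fun
    (fun t (ht : 0 < t) => ?_) measurableSet_Ioi
  simp only [Real.rpow_one, ENNReal.toReal_ofReal (Real.rpow_nonneg ht.le _)]
  ring_nf

lemma complexMGF_neg_rpowMeasureIoi (s : ℝ) (w : ℂ) :
    complexMGF (fun t => -t) (rpowMeasureIoi s) w =
      ∫ t in Ioi (0 : ℝ), (t : ℂ) ^ ((s : ℂ) - 1) * Complex.exp (-(w * t)) := by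
  simp only [complexMGF, integral_rpowMeasureIoi, Complex.ofReal_neg, mul_neg]

theorem integrableOn_cpow_mul_cexp_neg_mul_Ioi {s : ℝ} (hs : 0 < s) {w : ℂ} (hw : 0 < w.re) :
    IntegrableOn (fun t : ℝ => (t : ℂ) ^ ((s : ℂ) - 1) * Complex.exp (-(w * t))) (Ioi 0) := by
  have := integrable_cexp_mul_of_re_mem_interior_integrableExpSet
    (Ioi_subset_interior_integrableExpSet_rpowMeasureIoi hs hw)
  simpa only [integrable_rpowMeasureIoi_iff, Complex.ofReal_neg, mul_neg] using this

theorem integral_cpow_mul_cexp_neg_mul_Ioi_of_re_pos {s : ℝ} (hs : 0 < s) {w : ℂ}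
    (hw : 0 < w.re) :
    ∫ t in Ioi (0 : ℝ), (t : ℂ) ^ ((s : ℂ) - 1) * Complex.exp (-(w * t)) =
      Real.Gamma s / w ^ (s : ℂ) := by
  have hMGF : AnalyticOnNhd ℂ (complexMGF (fun t => -t) (rpowMeasureIoi s)) {w | 0 < w.re} :=
    analyticOnNhd_complexMGF.mono fun w hw =>
      Ioi_subset_interior_integrableExpSet_rpowMeasureIoi hs hw
  have hG :
      AnalyticOnNhd ℂ (fun w : ℂ => (Real.Gamma s : ℂ) / w ^ (s : ℂ)) {w | 0 < w.re} := by
    refine DifferentiableOn.analyticOnNhd (fun w (hw : 0 < w.re) => ?_)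
      (isOpen_lt continuous_const Complex.continuous_re)
    have hw0 : w ≠ 0 := fun h => by simp [h] at hw
    exact ((differentiableAt_const _).div (differentiableAt_id.cpow_const (Or.inl hw))
      (by simp [Complex.cpow_eq_zero_iff, hw0])).differentiableWithinAt
  have hreal : Tendsto ((↑) : ℝ → ℂ) (𝓝[≠] 1) (𝓝[≠] 1) :=
    Complex.continuous_ofReal.continuousWithinAt.tendsto_nhdsWithin fun _ h =>
      Complex.ofReal_ne_one.mpr h
  rw [← complexMGF_neg_rpowMeasureIoi]
  refine hMGF.eqOn_of_preconnected_of_frequently_eq hG (convex_halfSpace_re_gt 0).isPreconnected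
    (z₀ := 1) (by simp) (hreal.frequently ?_) hw
  refine ((eventually_gt_nhds zero_lt_one).filter_mono nhdsWithin_le_nhds).frequently.mono
    fun r (hr : 0 < r) => ?_
  have harg : (r : ℂ).arg ≠ Real.pi := by
    simp [Complex.arg_ofReal_of_nonneg hr.le, Real.pi_ne_zero.symm]
  rw [complexMGF_neg_rpowMeasureIoi,
    Complex.integral_cpow_mul_exp_neg_mul_Ioi (by simpa using hs) hr, one_div,
    Complex.inv_cpow _ _ harg, Complex.Gamma_ofReal, div_eq_inv_mul]

theorem Real.Gamma_add_nat_eq_mul_ascPochhammer {x : ℝ} (hx : 0 < x) (k : ℕ) :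
    Real.Gamma (x + k) = Real.Gamma x * (ascPochhammer ℝ k).eval x := by
  induction k with
  | zero => simp
  | succ k ih =>
    rw [Nat.cast_succ, ← add_assoc, Real.Gamma_add_one (by positivity), ih,
      ascPochhammer_succ_eval]
    ring

@[simp, norm_cast]
theorem Complex.ofReal_ascPochhammer_eval (k : ℕ) (x : ℝ) :
    (((ascPochhammer ℝ k).eval x : ℝ) : ℂ) = (ascPochhammer ℂ k).eval (x : ℂ) := by
  rw [ascPochhammer_eval₂ Complex.ofRealHom]
  exact (Polynomial.eval₂_at_apply Complex.ofRealHom x).symm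

theorem ofReal_Gamma_add_nat_div_cpow {s : ℝ} (hs : 0 < s) {w : ℂ} (hw : w ≠ 0) (k : ℕ) :
    (Real.Gamma (s + k) : ℂ) / w ^ ((s + k : ℝ) : ℂ) =
      Real.Gamma s / w ^ (s : ℂ) * ((ascPochhammer ℂ k).eval (s : ℂ) / w ^ k) := by
  rw [Real.Gamma_add_nat_eq_mul_ascPochhammer hs, Complex.ofReal_mul,
    Complex.ofReal_ascPochhammer_eval, Complex.ofReal_add, Complex.ofReal_natCast,
    Complex.cpow_add _ _ hw, Complex.cpow_natCast, mul_div_mul_comm]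

theorem ascPochhammer_eval_neg_natCast_mul_factorial {R : Type*} [CommRing R] {n k : ℕ}
    (hk : k ≤ n) :
    (ascPochhammer R k).eval (-(n : R)) * (n - k).factorial = (-1) ^ k * n.factorial := by
  rw [ascPochhammer_eval_neg_eq_descPochhammer, descPochhammer_eval_eq_descFactorial, mul_assoc,
    ← Nat.cast_mul, mul_comm (n.descFactorial k), Nat.factorial_mul_descFactorial hk]

theorem lagPoly_eq_sum_ascPochhammer {α : ℝ} (hα : -1 < α) (n : ℕ) (t : ℝ) :
    lagPoly α n t = Real.Gamma (n + α + 1) / (Real.Gamma (α + 1) * n.factorial) *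
      ∑ k ∈ Finset.range (n + 1), (ascPochhammer ℝ k).eval (-(n : ℝ)) /
        ((ascPochhammer ℝ k).eval (α + 1) * k.factorial) * t ^ k := by
  rw [lagPoly, Finset.mul_sum]
  refine Finset.sum_congr rfl fun k hk => ?_
  have hα1 : 0 < α + 1 := by linarith
  have hGamma : Real.Gamma (k + α + 1) =
      Real.Gamma (α + 1) * (ascPochhammer ℝ k).eval (α + 1) := by
    rw [← Real.Gamma_add_nat_eq_mul_ascPochhammer hα1]
    ring_nf
  have hneg := ascPochhammer_eval_neg_natCast_mul_factorial (R := ℝ)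
    (Nat.lt_succ_iff.mp (Finset.mem_range.mp hk))
  have hpoch_ne : (ascPochhammer ℝ k).eval (α + 1) ≠ 0 := (ascPochhammer_pos k _ hα1).ne'
  have hGamma_ne : Real.Gamma (α + 1) ≠ 0 := (Real.Gamma_pos_of_pos hα1).ne'
  rw [hGamma]
  field_simp
  linear_combination (-Real.Gamma (n + α + 1) * t ^ k) * hneg

theorem pow_mul_exp_mul_lagFun_eq_sum {α τ : ℝ} (hα : -1 < α) (n j : ℕ) (z : ℂ) {t : ℝ}
    (ht : 0 < t) :
    (t : ℂ) ^ j * Complex.exp (z * t) * (lagFun α τ n t : ℂ) =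
      ((τ ^ ((α + 1) / 2) : ℝ) : ℂ) *
        ((Real.Gamma (n + α + 1) / (Real.Gamma (α + 1) * n.factorial) : ℝ) : ℂ) *
        ((Real.sqrt (n.factorial / Real.Gamma (n + α + 1)) : ℝ) : ℂ) *
        ∑ k ∈ Finset.range (n + 1),
          (ascPochhammer ℂ k).eval (-(n : ℂ)) /
              ((ascPochhammer ℂ k).eval ((α : ℂ) + 1) * k.factorial) * (τ : ℂ) ^ k *
            ((t : ℂ) ^ (((α / 2 + j + 1 + k : ℝ) : ℂ) - 1) *
              Complex.exp (-(((τ / 2 : ℂ) - z) * t))) := by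
  have hpow (k : ℕ) : (t : ℂ) ^ (((α / 2 + j + 1 + k : ℝ) : ℂ) - 1) =
      ((t ^ (α / 2) : ℝ) : ℂ) * (t : ℂ) ^ j * (t : ℂ) ^ k := by
    have ht0 : (t : ℂ) ≠ 0 := Complex.ofReal_ne_zero.mpr ht.ne'
    rw [Complex.ofReal_cpow ht.le, ← Complex.cpow_natCast, ← Complex.cpow_natCast,
      ← Complex.cpow_add _ _ ht0, ← Complex.cpow_add _ _ ht0]
    push_cast
    ring_nf
  have hexp : Complex.exp (-(((τ / 2 : ℂ) - z) * t)) =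
      Complex.exp (z * t) * Real.exp (-τ * t / 2) := by
    rw [Complex.ofReal_exp, ← Complex.exp_add]
    push_cast
    ring_nf
  simp only [hpow, hexp, lagFun, lagPoly_eq_sum_ascPochhammer hα]
  push_cast [Finset.mul_sum]
  refine Finset.sum_congr rfl fun k _ => ?_
  ring

theorem integral_pow_exp_lagFun (τ α : ℝ) (hτ : 0 < τ) (hα : -1 < α)
    (n j : ℕ) (z : ℂ) (hz : z.re < 0) :
    (∫ t in Set.Ioi (0 : ℝ), (t : ℂ) ^ j * Complex.exp (z * t) * (lagFun α τ n t : ℂ)) =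
      ((Real.Gamma (α / 2 + j + 1) : ℂ) / ((τ / 2 : ℂ) - z) ^ ((α / 2 + j + 1 : ℝ) : ℂ)) *
        ((τ ^ ((α + 1) / 2) : ℝ) : ℂ) *
        ((Real.Gamma (n + α + 1) / (Real.Gamma (α + 1) * n.factorial) : ℝ) : ℂ) *
        ((Real.sqrt (n.factorial / Real.Gamma (n + α + 1)) : ℝ) : ℂ) *
        ∑ k ∈ Finset.range (n + 1),
          ((ascPochhammer ℂ k).eval (-(n : ℂ)) *
              (ascPochhammer ℂ k).eval ((α : ℂ) / 2 + j + 1)) /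
              ((ascPochhammer ℂ k).eval ((α : ℂ) + 1) * (k.factorial : ℂ)) *
            ((τ : ℂ) / ((τ / 2 : ℂ) - z)) ^ k := by
  have hs : 0 < α / 2 + j + 1 := by linarith [(Nat.cast_nonneg j : (0 : ℝ) ≤ j)]
  have hsk (k : ℕ) : 0 < α / 2 + j + 1 + k := by positivity
  have hw : 0 < ((τ / 2 : ℂ) - z).re := by
    simp only [Complex.sub_re, Complex.div_ofNat_re, Complex.ofReal_re]
    linarith
  have hw0 : (τ / 2 : ℂ) - z ≠ 0 := fun h => by simp [h] at hw
  rw [setIntegral_congr_fun measurableSet_Ioi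
      fun t ht => pow_mul_exp_mul_lagFun_eq_sum hα n j z ht,
    integral_const_mul, integral_finsetSum _
      fun k _ => (integrableOn_cpow_mul_cexp_neg_mul_Ioi (hsk k) hw).const_mul _,
    Finset.mul_sum, Finset.mul_sum]
  refine Finset.sum_congr rfl fun k _ => ?_
  rw [integral_const_mul, integral_cpow_mul_cexp_neg_mul_Ioi_of_re_pos (hsk k) hw,
    ofReal_Gamma_add_nat_div_cpow hs hw0]
  push_cast
  ring
end

section
/- Let A be an M×M complex matrix that is diagonalizable: A = T·D·T⁻¹ with T invertible and D diagonal with diagonal entries λ_1,…,λ_M satisfying Re λ_k < 0 for all k. Let τ > 0, α > −1, N ∈ ℕ. Then ‖H_A − H_{N,τ,α,A}‖_{L²[0,∞)} ≤ κ(T) · √(Σ_{k=1}^M ζ(N,τ,α,λ_k)) ≤ κ(T) · √(M · max_k ζ(N,τ,α,λ_k)), where κ(T) = ‖T‖_{2→2} · ‖T⁻¹‖_{2→2} is the condition number of T with respect to the operator norm induced by the Euclidean norm on ℂ^M. -/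
open MeasureTheory

/-- The Laguerre coefficient `s_{n,τ,α,λ} = ∫₀^∞ e^{λ t} l_{n,τ}^α(t) dt`. -/
noncomputable def lagCoef (α τ : ℝ) (n : ℕ) (z : ℂ) : ℂ :=
  ∫ t in Set.Ioi (0 : ℝ), Complex.exp (z * t) * (lagFun α τ n t : ℂ)

/-- `ζ(N,τ,α,λ)`: the squared `L²[0,∞)` error of the `N`-truncated Laguerre expansion
of `t ↦ e^{λt}`. -/
noncomputable def lagZeta (N : ℕ) (τ α : ℝ) (z : ℂ) : ℝ :=
  ∫ t in Set.Ioi (0 : ℝ),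
    ‖Complex.exp (z * t) -
        ∑ n ∈ Finset.range (N + 1), lagCoef α τ n z * (lagFun α τ n t : ℂ)‖ ^ 2

/-- The matrix Laguerre coefficient `S_{n,τ,α,A} = ∫₀^∞ exp(tA) l_{n,τ}^α(t) dt`
(entrywise integral). -/
noncomputable def matLagCoef (α τ : ℝ) (n : ℕ) {M : ℕ} (A : Matrix (Fin M) (Fin M) ℂ) :
    Matrix (Fin M) (Fin M) ℂ :=
  Matrix.of fun i j =>
    ∫ t in Set.Ioi (0 : ℝ), (NormedSpace.exp ((t : ℂ) • A)) i j * (lagFun α τ n t : ℂ)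

/-- The squared Frobenius norm of a complex matrix. -/
noncomputable def frobSq {M : ℕ} (C : Matrix (Fin M) (Fin M) ℂ) : ℝ :=
  ∑ i, ∑ j, ‖C i j‖ ^ 2

/-- The operator norm of a complex matrix induced by the Euclidean norm on `ℂ^M`. -/
noncomputable def l2OpNorm {M : ℕ} (C : Matrix (Fin M) (Fin M) ℂ) : ℝ :=
  ‖(Matrix.toEuclideanCLM (𝕜 := ℂ) C : EuclideanSpace ℂ (Fin M) →L[ℂ] EuclideanSpace ℂ (Fin M))‖

/-!
Write `A = T D T⁻¹` with `D = diag(λ_k)`. Then `exp(tA) = T exp(tD) T⁻¹`, and since the Laguerre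
coefficients are integrals against `exp(tA)`, also `S_n(A) = T diag(s_n(λ_k)) T⁻¹`. Hence the
truncation error is `T E(t) T⁻¹` with `E(t)` the diagonal matrix of the scalar errors
`e^{λ_k t} - ∑ s_n(λ_k) l_n(t)`. Column by column, `‖T C‖_F ≤ ‖T‖₂ ‖C‖_F`, and by passing to
conjugate transposes `‖C S‖_F ≤ ‖S‖₂ ‖C‖_F`; integrating `‖T E(t) T⁻¹‖_F² ≤ κ(T)² ∑_k |E_kk(t)|²`
gives the first bound. The second is `∑_k ζ_k ≤ M max_k ζ_k`.

All integrals involved converge because `l_n` is a finite combination of `t^{α/2+k} e^{-τt/2}`,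
which lies in `L²(0,∞)` as `α > -1`, and `e^{λt}` lies in `L²(0,∞)` as `Re λ < 0`.
-/

open Set Matrix

lemma memLp_two_rpow_mul_exp_neg_mul {q c : ℝ} (hq : -1 < 2 * q) (hc : 0 < c) :
    MemLp (fun t : ℝ => t ^ q * Real.exp (-c * t)) 2 (volume.restrict (Ioi 0)) := by
  have hmeas : AEStronglyMeasurable (fun t : ℝ => t ^ q * Real.exp (-c * t))
      (volume.restrict (Ioi 0)) := by fun_prop
  refine (memLp_two_iff_integrable_sq_norm hmeas).2 <|
    (integrableOn_rpow_mul_exp_neg_mul_rpow hq one_pos (by linarith : 0 < 2 * c)).congr_fun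
      (fun t (ht : 0 < t) => ?_) measurableSet_Ioi
  dsimp only
  rw [Real.rpow_one, Real.norm_eq_abs, sq_abs, mul_pow, ← Real.rpow_mul_natCast ht.le,
    ← Real.exp_nat_mul]
  ring_nf

lemma exists_lagFun_eq_sum (α τ : ℝ) (n : ℕ) :
    ∃ c : ℕ → ℝ, ∀ t, 0 < t → lagFun α τ n t =
      ∑ k ∈ Finset.range (n + 1), c k * (t ^ (α / 2 + k) * Real.exp (-(τ / 2) * t)) := by
  refine ⟨fun k => Real.sqrt (n.factorial / Real.Gamma (n + α + 1)) * τ ^ ((α + 1) / 2) *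
    ((-1) ^ k * (Real.Gamma (n + α + 1) / (Real.Gamma (k + α + 1) * (n - k).factorial)) *
      τ ^ k / k.factorial), fun t ht => ?_⟩
  simp only [lagFun, lagPoly, Finset.mul_sum, Real.rpow_add ht, Real.rpow_natCast]
  refine Finset.sum_congr rfl fun k _ => ?_
  ring_nf

section Laguerre

variable {α τ : ℝ}

lemma memLp_lagFun (hτ : 0 < τ) (hα : -1 < α) (n : ℕ) :
    MemLp (lagFun α τ n) 2 (volume.restrict (Ioi 0)) := by
  obtain ⟨c, hc⟩ := exists_lagFun_eq_sum α τ n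
  refine MemLp.ae_eq ?_ (memLp_finsetSum (Finset.range (n + 1)) fun k _ =>
    (memLp_two_rpow_mul_exp_neg_mul (q := α / 2 + k) ?_ (half_pos hτ)).const_mul (c k))
  · filter_upwards [ae_restrict_mem measurableSet_Ioi] with t ht
    exact (hc t ht).symm
  · have : (0 : ℝ) ≤ k := k.cast_nonneg
    linarith

lemma memLp_cexp_mul {z : ℂ} (hz : z.re < 0) :
    MemLp (fun t : ℝ => Complex.exp (z * t)) 2 (volume.restrict (Ioi 0)) := by
  refine (memLp_two_rpow_mul_exp_neg_mul (q := 0) (by norm_num) (neg_pos.2 hz)).of_le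
    (by fun_prop) (Filter.Eventually.of_forall fun t => ?_)
  simp [Complex.norm_exp]

lemma integrable_cexp_mul_mul_lagFun (hτ : 0 < τ) (hα : -1 < α) {z : ℂ} (hz : z.re < 0)
    (n : ℕ) :
    Integrable (fun t : ℝ => Complex.exp (z * t) * (lagFun α τ n t : ℂ))
      (volume.restrict (Ioi 0)) :=
  (memLp_cexp_mul hz).integrable_mul (memLp_lagFun hτ hα n).ofReal

noncomputable def lagErr (N : ℕ) (τ α : ℝ) (z : ℂ) (t : ℝ) : ℂ :=
  Complex.exp (z * t) - ∑ n ∈ Finset.range (N + 1), lagCoef α τ n z * (lagFun α τ n t : ℂ)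

lemma integrable_norm_lagErr_sq (hτ : 0 < τ) (hα : -1 < α) {z : ℂ} (hz : z.re < 0) (N : ℕ) :
    Integrable (fun t => ‖lagErr N τ α z t‖ ^ 2) (volume.restrict (Ioi 0)) := by
  have h : MemLp (lagErr N τ α z) 2 (volume.restrict (Ioi 0)) :=
    (memLp_cexp_mul hz).sub <| memLp_finsetSum _ fun n _ =>
      (memLp_lagFun hτ hα n).ofReal.const_mul _
  exact (memLp_two_iff_integrable_sq_norm h.1).1 h

end Laguerre

section MatrixNorms

variable {M : ℕ}

lemma frobSq_nonneg (C : Matrix (Fin M) (Fin M) ℂ) : 0 ≤ frobSq C := by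
  unfold frobSq
  positivity

lemma frobSq_diagonal (v : Fin M → ℂ) : frobSq (diagonal v) = ∑ k, ‖v k‖ ^ 2 := by
  simp [frobSq, diagonal_apply, apply_ite]

lemma frobSq_conjTranspose (C : Matrix (Fin M) (Fin M) ℂ) : frobSq Cᴴ = frobSq C := by
  simp only [frobSq, conjTranspose_apply, norm_star]
  exact Finset.sum_comm

lemma l2OpNorm_conjTranspose (C : Matrix (Fin M) (Fin M) ℂ) : l2OpNorm Cᴴ = l2OpNorm C :=
  open scoped Matrix.Norms.L2Operator in l2_opNorm_conjTranspose C

lemma sum_norm_mulVec_sq_le (T : Matrix (Fin M) (Fin M) ℂ) (v : Fin M → ℂ) :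
    ∑ i, ‖(T *ᵥ v) i‖ ^ 2 ≤ l2OpNorm T ^ 2 * ∑ i, ‖v i‖ ^ 2 := by
  have h : ‖toEuclideanCLM (𝕜 := ℂ) T (WithLp.toLp 2 v)‖ ^ 2 ≤
      (l2OpNorm T * ‖WithLp.toLp 2 v‖) ^ 2 := by
    gcongr
    exact ContinuousLinearMap.le_opNorm _ _
  simpa [EuclideanSpace.norm_sq_eq, mul_pow] using h

lemma frobSq_mul_le (T B : Matrix (Fin M) (Fin M) ℂ) :
    frobSq (T * B) ≤ l2OpNorm T ^ 2 * frobSq B := by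
  simp only [frobSq]
  rw [Finset.sum_comm, Finset.sum_comm (f := fun i j => ‖B i j‖ ^ 2), Finset.mul_sum]
  exact Finset.sum_le_sum fun j _ => sum_norm_mulVec_sq_le T fun k => B k j

lemma frobSq_mul_le' (B S : Matrix (Fin M) (Fin M) ℂ) :
    frobSq (B * S) ≤ l2OpNorm S ^ 2 * frobSq B := by
  have h := frobSq_mul_le Sᴴ Bᴴ
  rwa [← conjTranspose_mul, frobSq_conjTranspose, l2OpNorm_conjTranspose,
    frobSq_conjTranspose] at h

lemma frobSq_mul_mul_le (T C S : Matrix (Fin M) (Fin M) ℂ) :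
    frobSq (T * C * S) ≤ (l2OpNorm T * l2OpNorm S) ^ 2 * frobSq C :=
  calc frobSq (T * C * S) ≤ l2OpNorm S ^ 2 * (l2OpNorm T ^ 2 * frobSq C) :=
        (frobSq_mul_le' _ S).trans (by gcongr; exact frobSq_mul_le T C)
    _ = (l2OpNorm T * l2OpNorm S) ^ 2 * frobSq C := by ring

lemma integral_frobSq_conj_diagonal_le {X : Type*} [MeasurableSpace X] {μ : Measure X}
    (T S : Matrix (Fin M) (Fin M) ℂ) {f : Fin M → X → ℂ}
    (hf : ∀ k, Integrable (fun x => ‖f k x‖ ^ 2) μ) :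
    ∫ x, frobSq (T * diagonal (fun k => f k x) * S) ∂μ ≤
      (l2OpNorm T * l2OpNorm S) ^ 2 * ∑ k, ∫ x, ‖f k x‖ ^ 2 ∂μ := by
  rw [← integral_finsetSum _ fun k _ => hf k, ← integral_const_mul]
  refine integral_mono_of_nonneg (ae_of_all _ fun x => frobSq_nonneg _)
    ((integrable_finsetSum _ fun k _ => hf k).const_mul _) (ae_of_all _ fun x => ?_)
  simpa only [frobSq_diagonal] using frobSq_mul_mul_le T (diagonal fun k => f k x) S

end MatrixNorms

section Diagonalizable

variable {m : Type*} [Fintype m] [DecidableEq m]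

lemma conj_diagonal_apply {R : Type*} [NonUnitalNonAssocSemiring R] (T S : Matrix m m R)
    (d : m → R) (i j : m) :
    (T * diagonal d * S) i j = ∑ k, T i k * d k * S k j := by
  rw [mul_apply]
  simp only [mul_diagonal]

lemma integral_conj_diagonal_apply {X : Type*} [MeasurableSpace X] {μ : Measure X}
    (T S : Matrix m m ℂ) {f : m → X → ℂ} (hf : ∀ k, Integrable (f k) μ) (i j : m) :
    ∫ x, (T * diagonal (fun k => f k x) * S) i j ∂μ =
      (T * diagonal (fun k => ∫ x, f k x ∂μ) * S) i j := by
  simp only [conj_diagonal_apply]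
  rw [integral_finsetSum _ fun k _ => ((hf k).const_mul _).mul_const _]
  simp only [integral_mul_const, integral_const_mul]

lemma exp_smul_conj_diagonal {T : Matrix m m ℂ} (hT : IsUnit T) (lam : m → ℂ) (t : ℝ) :
    NormedSpace.exp ((t : ℂ) • (T * diagonal lam * T⁻¹)) =
      T * diagonal (fun k => Complex.exp (lam k * t)) * T⁻¹ := by
  rw [← smul_mul_assoc, ← mul_smul_comm, Matrix.exp_conj T _ hT, ← diagonal_smul,
    Matrix.exp_diagonal]
  congr
  funext k
  simp [Complex.exp_eq_exp_ℂ, mul_comm]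

end Diagonalizable

section LaguerreDiagonalizable

variable {M : ℕ} {α τ : ℝ} {T : Matrix (Fin M) (Fin M) ℂ} {lam : Fin M → ℂ}

lemma matLagCoef_conj_diagonal (hτ : 0 < τ) (hα : -1 < α) (hT : IsUnit T)
    (hlam : ∀ k, (lam k).re < 0) (n : ℕ) :
    matLagCoef α τ n (T * diagonal lam * T⁻¹) =
      T * diagonal (fun k => lagCoef α τ n (lam k)) * T⁻¹ := by
  ext i j
  have h : ∀ t : ℝ, NormedSpace.exp ((t : ℂ) • (T * diagonal lam * T⁻¹)) i j *
      (lagFun α τ n t : ℂ) =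
        (T * diagonal (fun k => Complex.exp (lam k * t) * lagFun α τ n t) * T⁻¹) i j := by
    intro t
    simp only [exp_smul_conj_diagonal hT, conj_diagonal_apply, Finset.sum_mul]
    exact Finset.sum_congr rfl fun k _ => by ring
  simp only [matLagCoef, of_apply, h]
  exact integral_conj_diagonal_apply _ _
    (fun k => integrable_cexp_mul_mul_lagFun hτ hα (hlam k) n) i j

lemma exp_sub_truncation_conj_diagonal (hτ : 0 < τ) (hα : -1 < α) (hT : IsUnit T)
    (hlam : ∀ k, (lam k).re < 0) (N : ℕ) (t : ℝ) :
    NormedSpace.exp ((t : ℂ) • (T * diagonal lam * T⁻¹)) -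
        ∑ n ∈ Finset.range (N + 1),
          (lagFun α τ n t : ℂ) • matLagCoef α τ n (T * diagonal lam * T⁻¹) =
      T * diagonal (fun k => lagErr N τ α (lam k) t) * T⁻¹ := by
  ext i j
  simp only [Matrix.sub_apply, Matrix.sum_apply, Matrix.smul_apply, smul_eq_mul,
    exp_smul_conj_diagonal hT, matLagCoef_conj_diagonal hτ hα hT hlam, conj_diagonal_apply,
    Finset.mul_sum, lagErr, mul_sub, sub_mul, Finset.sum_mul]
  rw [Finset.sum_comm (s := Finset.range (N + 1)), ← Finset.sum_sub_distrib]
  refine Finset.sum_congr rfl fun k _ => congrArg₂ _ rfl (Finset.sum_congr rfl fun n _ => ?_)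
  ring

end LaguerreDiagonalizable

theorem truncation_error_le_of_diagonalizable (M : ℕ)
    (A T : Matrix (Fin M) (Fin M) ℂ) (hT : IsUnit T) (lam : Fin M → ℂ)
    (hlam : ∀ k, (lam k).re < 0) (hA : A = T * Matrix.diagonal lam * T⁻¹)
    (τ α : ℝ) (hτ : 0 < τ) (hα : -1 < α) (N : ℕ) :
    Real.sqrt (∫ t in Set.Ioi (0 : ℝ),
        frobSq (NormedSpace.exp ((t : ℂ) • A) -
          ∑ n ∈ Finset.range (N + 1), (lagFun α τ n t : ℂ) • matLagCoef α τ n A)) ≤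
        l2OpNorm T * l2OpNorm T⁻¹ * Real.sqrt (∑ k, lagZeta N τ α (lam k)) ∧
      l2OpNorm T * l2OpNorm T⁻¹ * Real.sqrt (∑ k, lagZeta N τ α (lam k)) ≤
        l2OpNorm T * l2OpNorm T⁻¹ *
          Real.sqrt (M * ⨆ k, lagZeta N τ α (lam k)) := by
  subst hA
  have hκ : 0 ≤ l2OpNorm T * l2OpNorm T⁻¹ := mul_nonneg (norm_nonneg _) (norm_nonneg _)
  refine ⟨?_, ?_⟩
  · rw [← Real.sqrt_sq hκ, ← Real.sqrt_mul (sq_nonneg _)]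
    refine Real.sqrt_le_sqrt ?_
    simp only [exp_sub_truncation_conj_diagonal hτ hα hT hlam]
    exact integral_frobSq_conj_diagonal_le T T⁻¹
      fun k => integrable_norm_lagErr_sq hτ hα (hlam k) N
  · gcongr
    simpa using Finset.sum_le_card_nsmul Finset.univ (fun k => lagZeta N τ α (lam k)) _
      fun k _ => le_ciSup (Set.finite_range fun k => lagZeta N τ α (lam k)).bddAbove k
end
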